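/- Let c, α, β, γ be complex numbers with Re(c) > Re(γ) > 0, Re(α) > 0 and Re(β) > 0. Setting q = p, so that E^{γ,c}_{α,β}(z; p) := E^{γ,c}_{α,β}(z; p, p) is the extended Mittag-Leffler function built from the one-parameter extended beta function β_p, one has for every complex z: ∫₀^∞ E^{γ,c}_{α,β}(z; p) dp = [Γ(c+1−γ) / (Γ(γ) Γ(c−γ))] · Σ_{n=0}^∞ [Γ(c+n) Γ(γ+1+n) / (Γ(α n + β) Γ(c+2+n))] z^n / n!. -/

import Mathlib

open MeasureTheory Complex

/-- The extended beta function `B(x, y; p, q) = ∫₀¹ t^(x-1) (1-t)^(y-1) exp(-p/t - q/(1-t)) dt`. -/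
noncomputable def extBeta (p q x y : ℂ) : ℂ :=
  ∫ t in (0:ℝ)..1, (t : ℂ) ^ (x - 1) * (1 - (t : ℂ)) ^ (y - 1) *
    Complex.exp (-(p / t) - q / (1 - (t : ℂ)))

/-- The classical beta function `B(x, y) = Γ(x)Γ(y)/Γ(x+y)`. -/
noncomputable def cBeta (x y : ℂ) : ℂ :=
  Complex.Gamma x * Complex.Gamma y / Complex.Gamma (x + y)

/-- The Pochhammer symbol `(c)ₙ = c (c+1) ⋯ (c+n-1)`. -/
noncomputable def poch (c : ℂ) (n : ℕ) : ℂ :=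
  ∏ i ∈ Finset.range n, (c + i)

/-- The Prabhakar Mittag-Leffler function `E^c_{α,β}(z) = Σ (c)ₙ zⁿ / (Γ(αn+β) n!)`. -/
noncomputable def prabhakarML (α β c z : ℂ) : ℂ :=
  ∑' n : ℕ, poch c n * z ^ n / (Complex.Gamma (α * n + β) * n.factorial)

/-- The extended (p,q)-Mittag-Leffler function
`E^{γ,c}_{α,β}(z; p, q) = Σ [B(γ+n, c-γ; p, q)/B(γ, c-γ)] (c)ₙ zⁿ / (Γ(αn+β) n!)`. -/
noncomputable def extML (α β γ c p q z : ℂ) : ℂ :=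
  ∑' n : ℕ, extBeta p q (γ + n) (c - γ) / cBeta γ (c - γ) * poch c n * z ^ n /
    (Complex.Gamma (α * n + β) * n.factorial)

/-!
Integrating in `p` first, `∫₀^∞ exp(-p/(t(1-t))) dp = t(1-t)`, so by Fubini
`∫₀^∞ β_p(x, y) dp = B(x+1, y+1)`, and the theorem is this identity applied termwise followed by
`Γ`-function bookkeeping. Integrating termwise is legitimate because
`‖β_p(γ+n, y)‖ ≤ e^{-4p} B(Re γ, Re y)` uniformly in `n` (as `t(1-t) ≤ 1/4`) and the Prabhakar series
converges absolutely. The latter is the ratio test: from `Γ(s)Γ(α) = B(s, α)Γ(s+α)` one gets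
`‖Γ(s)/Γ(s+α)‖ ≤ B(Re s, Re α)/‖Γ(α)‖`, and `B(σ, a) → 0` as `σ → ∞`.
-/

open Filter Topology Set

noncomputable def realBeta (u v : ℝ) : ℝ :=
  ∫ t in Ioo (0:ℝ) 1, t ^ (u - 1) * (1 - t) ^ (v - 1)

lemma norm_cpow_mul_one_sub_cpow {t : ℝ} (ht : t ∈ Ioo (0:ℝ) 1) (u v : ℂ) :
    ‖(t : ℂ) ^ (u - 1) * (1 - (t : ℂ)) ^ (v - 1)‖ = t ^ (u.re - 1) * (1 - t) ^ (v.re - 1) := by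
  have h1t : (0:ℝ) < 1 - t := sub_pos.2 ht.2
  rw [norm_mul, Complex.norm_cpow_eq_rpow_re_of_pos ht.1, ← Complex.ofReal_one,
    ← Complex.ofReal_sub, Complex.norm_cpow_eq_rpow_re_of_pos h1t]
  simp

lemma integrableOn_realBeta {u v : ℝ} (hu : 0 < u) (hv : 0 < v) :
    IntegrableOn (fun t : ℝ => t ^ (u - 1) * (1 - t) ^ (v - 1)) (Ioo 0 1) := by
  have h := (betaIntegral_convergent (u := u) (v := v) (by simpa) (by simpa)).norm
  rw [intervalIntegrable_iff_integrableOn_Ioo_of_le zero_le_one] at h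
  refine h.congr_fun (fun t ht => ?_) measurableSet_Ioo
  simpa using norm_cpow_mul_one_sub_cpow ht u v

lemma norm_betaIntegral_le (u v : ℂ) : ‖betaIntegral u v‖ ≤ realBeta u.re v.re := by
  rw [betaIntegral, intervalIntegral.integral_of_le zero_le_one, integral_Ioc_eq_integral_Ioo]
  exact (norm_integral_le_integral_norm _).trans_eq
    (setIntegral_congr_fun measurableSet_Ioo fun t ht => norm_cpow_mul_one_sub_cpow ht u v)

lemma rpow_sub_one_mul_le_of_le {t u u' : ℝ} (ht : t ∈ Ioo (0:ℝ) 1) (huu' : u ≤ u') (v : ℝ) :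
    t ^ (u' - 1) * (1 - t) ^ (v - 1) ≤ t ^ (u - 1) * (1 - t) ^ (v - 1) :=
  mul_le_mul_of_nonneg_right (Real.rpow_le_rpow_of_exponent_ge ht.1 ht.2.le (by linarith))
    (Real.rpow_nonneg (sub_pos.2 ht.2).le _)

lemma realBeta_le_of_le {u u' v : ℝ} (hu : 0 < u) (hv : 0 < v) (huu' : u ≤ u') :
    realBeta u' v ≤ realBeta u v :=
  setIntegral_mono_on (integrableOn_realBeta (hu.trans_le huu') hv) (integrableOn_realBeta hu hv)
    measurableSet_Ioo fun _ ht => rpow_sub_one_mul_le_of_le ht huu' v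

lemma tendsto_realBeta_atTop {v : ℝ} (hv : 0 < v) :
    Tendsto (fun u => realBeta u v) atTop (𝓝 0) := by
  have hlim : ∀ t ∈ Ioo (0:ℝ) 1,
      Tendsto (fun u : ℝ => t ^ (u - 1) * (1 - t) ^ (v - 1)) atTop (𝓝 0) := fun t ht => by
    simpa [sub_eq_add_neg] using ((tendsto_rpow_atTop_of_base_lt_one t (by linarith [ht.1]) ht.2).comp
      (tendsto_atTop_add_const_right _ (-1) tendsto_id)).mul_const ((1 - t) ^ (v - 1))
  simpa [realBeta] using tendsto_integral_filter_of_dominated_convergence _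
    (Eventually.of_forall fun u => (by fun_prop : Measurable _).aestronglyMeasurable)
    ((eventually_ge_atTop 1).mono fun u hu => (ae_restrict_iff' measurableSet_Ioo).2
      (Eventually.of_forall fun t ht => by
        rw [Real.norm_of_nonneg (by have := ht.1; have := sub_pos.2 ht.2; positivity)]
        exact rpow_sub_one_mul_le_of_le ht hu v))
    (integrableOn_realBeta one_pos hv)
    ((ae_restrict_iff' measurableSet_Ioo).2 (Eventually.of_forall hlim))

lemma norm_Gamma_div_Gamma_add_le {s w : ℂ} (hs : 0 < s.re) (hw : 0 < w.re) :
    ‖Complex.Gamma s‖ / ‖Complex.Gamma (s + w)‖ ≤ realBeta s.re w.re / ‖Complex.Gamma w‖ := by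
  have hΓw := norm_pos_iff.2 (Complex.Gamma_ne_zero_of_re_pos hw)
  have hΓsw : 0 < ‖Complex.Gamma (s + w)‖ :=
    norm_pos_iff.2 (Complex.Gamma_ne_zero_of_re_pos (by simpa using add_pos hs hw))
  rw [div_le_div_iff₀ hΓsw hΓw, ← norm_mul, Complex.Gamma_mul_Gamma_eq_betaIntegral hs hw,
    norm_mul, mul_comm]
  exact mul_le_mul_of_nonneg_right (norm_betaIntegral_le s w) (norm_nonneg _)

lemma poch_succ (c : ℂ) (n : ℕ) : poch c (n + 1) = poch c n * (c + n) :=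
  Finset.prod_range_succ _ _

lemma norm_add_natCast_div_le (c : ℂ) (n : ℕ) : ‖c + n‖ / (n + 1) ≤ ‖c‖ + 1 := by
  rw [div_le_iff₀ (by positivity)]
  calc ‖c + n‖ ≤ ‖c‖ + n := by simpa using norm_add_le c n
    _ ≤ (‖c‖ + 1) * (n + 1) := by nlinarith [norm_nonneg c, (n.cast_nonneg : (0:ℝ) ≤ n)]

theorem summable_norm_prabhakar_term (c z : ℂ) {α β : ℂ} (hα : 0 < α.re) (hβ : 0 < β.re) :
    Summable fun n : ℕ => ‖poch c n * z ^ n / (Complex.Gamma (α * n + β) * n.factorial)‖ := by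
  set s : ℕ → ℂ := fun n => α * n + β
  have hs_re : ∀ n : ℕ, (s n).re = α.re * n + β.re := fun n => by simp [s]
  have hs : ∀ n, 0 < (s n).re := fun n => by rw [hs_re]; positivity
  set q : ℕ → ℝ := fun n => (‖c‖ + 1) * ‖z‖ * (realBeta (s n).re α.re / ‖Complex.Gamma α‖)
  have hq : Tendsto q atTop (𝓝 0) := by
    have hs_top : Tendsto (fun n => (s n).re) atTop atTop := by
      simp_rw [hs_re]
      exact tendsto_atTop_add_const_right _ _
        (tendsto_natCast_atTop_atTop.const_mul_atTop hα)
    simpa using (((tendsto_realBeta_atTop hα).comp hs_top).div_const _).const_mul ((‖c‖ + 1) * ‖z‖)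
  have hratio : ∀ n : ℕ, ‖poch c (n + 1) * z ^ (n + 1) /
      (Complex.Gamma (s (n + 1)) * (n + 1).factorial)‖ ≤
      q n * ‖poch c n * z ^ n / (Complex.Gamma (s n) * n.factorial)‖ := by
    intro n
    have hΓ : Complex.Gamma (s n) ≠ 0 := Complex.Gamma_ne_zero_of_re_pos (hs n)
    have hΓ' : Complex.Gamma (s n + α) ≠ 0 :=
      Complex.Gamma_ne_zero_of_re_pos (by simpa using add_pos (hs n) hα)
    have hsucc : poch c (n + 1) * z ^ (n + 1) / (Complex.Gamma (s (n + 1)) * (n + 1).factorial) =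
        poch c n * z ^ n / (Complex.Gamma (s n) * n.factorial) *
          ((c + n) / (n + 1) * z * (Complex.Gamma (s n) / Complex.Gamma (s n + α))) := by
      have : s (n + 1) = s n + α := by simp only [s]; push_cast; ring
      rw [this, poch_succ, pow_succ, Nat.factorial_succ]
      push_cast
      field_simp
    rw [hsucc, norm_mul, mul_comm]
    refine mul_le_mul_of_nonneg_right ?_ (norm_nonneg _)
    rw [norm_mul, norm_mul, norm_div, norm_div]
    simp only [q]
    gcongr ?_ * _ * ?_
    · exact_mod_cast norm_add_natCast_div_le c n
    · exact norm_Gamma_div_Gamma_add_le (hs n) hα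
  refine summable_of_ratio_norm_eventually_le (r := 1 / 2) (by norm_num) ?_
  filter_upwards [hq.eventually_le_const (by norm_num : (0:ℝ) < 1 / 2)] with n hn
  simpa only [norm_norm] using (hratio n).trans (by gcongr)

section ExtBeta

noncomputable def extBetaKernel (x y : ℂ) (q : ℝ × ℝ) : ℂ :=
  (q.2 : ℂ) ^ (x - 1) * (1 - (q.2 : ℂ)) ^ (y - 1) *
    Complex.exp (-((q.1 : ℂ) / q.2) - (q.1 : ℂ) / (1 - (q.2 : ℂ)))

lemma extBeta_eq_integral_extBetaKernel (x y : ℂ) (p : ℝ) :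
    extBeta p p x y = ∫ t in Ioo (0:ℝ) 1, extBetaKernel x y (p, t) := by
  rw [extBeta, intervalIntegral.integral_of_le zero_le_one, integral_Ioc_eq_integral_Ioo]
  rfl

lemma four_mul_le_div_add_div {p t : ℝ} (hp : 0 ≤ p) (ht : t ∈ Ioo (0:ℝ) 1) :
    4 * p ≤ p / t + p / (1 - t) := by
  have ht0 := ht.1
  have h1t : 0 < 1 - t := sub_pos.2 ht.2
  rw [div_add_div _ _ ht0.ne' h1t.ne', le_div_iff₀ (by positivity)]
  nlinarith [mul_nonneg hp (sq_nonneg (2 * t - 1))]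

lemma norm_extBetaKernel_le (x y : ℂ) {p t : ℝ} (hp : 0 ≤ p) (ht : t ∈ Ioo (0:ℝ) 1) :
    ‖extBetaKernel x y (p, t)‖ ≤ Real.exp (-4 * p) * (t ^ (x.re - 1) * (1 - t) ^ (y.re - 1)) := by
  have harg : -((p : ℂ) / t) - p / (1 - t) = ((-(p / t) - p / (1 - t) : ℝ) : ℂ) := by
    push_cast; ring
  have h0 : 0 ≤ t ^ (x.re - 1) * (1 - t) ^ (y.re - 1) := by
    have := ht.1; have := sub_pos.2 ht.2; positivity
  rw [extBetaKernel, norm_mul, norm_cpow_mul_one_sub_cpow ht, harg, Complex.norm_exp_ofReal,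
    mul_comm]
  exact mul_le_mul_of_nonneg_right
    (Real.exp_le_exp.2 (by linarith [four_mul_le_div_add_div hp ht])) h0

lemma continuousOn_extBetaKernel (x y : ℂ) :
    ContinuousOn (extBetaKernel x y) (Ioi 0 ×ˢ Ioo 0 1) := by
  have hslit : ∀ q ∈ Ioi (0:ℝ) ×ˢ Ioo (0:ℝ) 1,
      (q.2 : ℂ) ∈ Complex.slitPlane ∧ 1 - (q.2 : ℂ) ∈ Complex.slitPlane := fun q hq => by
    refine ⟨Complex.ofReal_mem_slitPlane.2 hq.2.1, ?_⟩
    rw [← Complex.ofReal_one, ← Complex.ofReal_sub]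
    exact Complex.ofReal_mem_slitPlane.2 (sub_pos.2 hq.2.2)
  unfold extBetaKernel
  refine ((ContinuousOn.cpow (by fun_prop) continuousOn_const fun q hq => (hslit q hq).1).mul
    (ContinuousOn.cpow (by fun_prop) continuousOn_const fun q hq => (hslit q hq).2)).mul
    (ContinuousOn.cexp ((ContinuousOn.div (by fun_prop) (by fun_prop) fun q hq => ?_).neg.sub
      (ContinuousOn.div (by fun_prop) (by fun_prop) fun q hq => ?_)))
  · exact Complex.slitPlane_ne_zero (hslit q hq).1
  · exact Complex.slitPlane_ne_zero (hslit q hq).2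

variable {x y : ℂ}

lemma integrable_extBetaKernel (hx : 0 < x.re) (hy : 0 < y.re) :
    Integrable (extBetaKernel x y) ((volume.restrict (Ioi 0)).prod (volume.restrict (Ioo 0 1))) := by
  have hmeas : MeasurableSet (Ioi (0:ℝ) ×ˢ Ioo (0:ℝ) 1) := measurableSet_Ioi.prod measurableSet_Ioo
  refine Integrable.mono'
    ((exp_neg_integrableOn_Ioi 0 (by norm_num : (0:ℝ) < 4)).mul_prod (integrableOn_realBeta hx hy))
    ?_ ?_
  · rw [Measure.prod_restrict]
    exact (continuousOn_extBetaKernel x y).aestronglyMeasurable hmeas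
  · rw [Measure.prod_restrict, ae_restrict_iff' hmeas]
    exact Eventually.of_forall fun q hq => norm_extBetaKernel_le x y (le_of_lt hq.1) hq.2

lemma integrableOn_extBeta (hx : 0 < x.re) (hy : 0 < y.re) :
    IntegrableOn (fun p : ℝ => extBeta p p x y) (Ioi 0) :=
  (integrable_extBetaKernel hx hy).integral_prod_left.congr
    (Eventually.of_forall fun p => (extBeta_eq_integral_extBetaKernel x y p).symm)

lemma norm_extBeta_le (hx : 0 < x.re) (hy : 0 < y.re) {p : ℝ} (hp : 0 ≤ p) :
    ‖extBeta p p x y‖ ≤ Real.exp (-4 * p) * realBeta x.re y.re := by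
  rw [extBeta_eq_integral_extBetaKernel, realBeta, ← integral_const_mul]
  exact norm_integral_le_of_norm_le ((integrableOn_realBeta hx hy).const_mul _)
    ((ae_restrict_iff' measurableSet_Ioo).2
      (Eventually.of_forall fun t ht => norm_extBetaKernel_le x y hp ht))

lemma integral_norm_extBeta_le (hx : 0 < x.re) (hy : 0 < y.re) :
    ∫ p in Ioi (0:ℝ), ‖extBeta p p x y‖ ≤ realBeta x.re y.re / 4 := by
  have hexp : ∫ p in Ioi (0:ℝ), Real.exp (-4 * p) = 1 / 4 := by
    rw [integral_exp_mul_Ioi (by norm_num) 0]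
    norm_num
  calc ∫ p in Ioi (0:ℝ), ‖extBeta p p x y‖
      ≤ ∫ p in Ioi (0:ℝ), Real.exp (-4 * p) * realBeta x.re y.re :=
        integral_mono_of_nonneg (Eventually.of_forall fun _ => norm_nonneg _)
          ((exp_neg_integrableOn_Ioi 0 (by norm_num : (0:ℝ) < 4)).mul_const _)
          ((ae_restrict_iff' measurableSet_Ioi).2
            (Eventually.of_forall fun _ hp => norm_extBeta_le hx hy (le_of_lt hp)))
    _ = realBeta x.re y.re / 4 := by rw [integral_mul_const, hexp]; ring

lemma integral_exp_neg_div_sub_div {t : ℝ} (ht : t ∈ Ioo (0:ℝ) 1) :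
    ∫ p in Ioi (0:ℝ), Complex.exp (-((p : ℂ) / t) - p / (1 - t)) = t * (1 - t) := by
  have ht0 : (t : ℂ) ≠ 0 := Complex.ofReal_ne_zero.2 ht.1.ne'
  have h1t : (1 - t : ℂ) ≠ 0 := by
    rw [← Complex.ofReal_one, ← Complex.ofReal_sub]
    exact Complex.ofReal_ne_zero.2 (sub_pos.2 ht.2).ne'
  set a : ℂ := -(1 / t + 1 / (1 - t))
  have ha : a.re < 0 := by
    have : a = ((-(1 / t + 1 / (1 - t)) : ℝ) : ℂ) := by push_cast; rfl
    rw [this, Complex.ofReal_re, neg_lt_zero]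
    have := ht.1; have := sub_pos.2 ht.2; positivity
  have hint : ∀ p : ℝ, Complex.exp (-((p : ℂ) / t) - p / (1 - t)) = Complex.exp (a * p) :=
    fun p => by congr 1; simp only [a]; ring
  simp_rw [hint, integral_exp_mul_complex_Ioi ha 0]
  simp only [a, Complex.ofReal_zero, mul_zero, Complex.exp_zero]
  field_simp
  ring

lemma integral_extBeta (hx : 0 < x.re) (hy : 0 < y.re) :
    ∫ p in Ioi (0:ℝ), extBeta p p x y = betaIntegral (x + 1) (y + 1) := by
  simp_rw [extBeta_eq_integral_extBetaKernel]
  rw [integral_integral_swap (f := fun p t => extBetaKernel x y (p, t))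
    (integrable_extBetaKernel hx hy), betaIntegral,
    intervalIntegral.integral_of_le zero_le_one, integral_Ioc_eq_integral_Ioo]
  refine setIntegral_congr_fun measurableSet_Ioo fun t ht => ?_
  have ht0 : (t : ℂ) ≠ 0 := Complex.ofReal_ne_zero.2 ht.1.ne'
  have h1t : (1 - t : ℂ) ≠ 0 := by
    rw [← Complex.ofReal_one, ← Complex.ofReal_sub]
    exact Complex.ofReal_ne_zero.2 (sub_pos.2 ht.2).ne'
  simp only [extBetaKernel]
  rw [integral_const_mul, integral_exp_neg_div_sub_div ht, add_sub_cancel_right,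
    add_sub_cancel_right, Complex.cpow_sub _ _ ht0, Complex.cpow_sub _ _ h1t,
    Complex.cpow_one, Complex.cpow_one]
  field_simp

end ExtBeta

theorem integral_tsum_extBeta_mul {γ y : ℂ} (hγ : 0 < γ.re) (hy : 0 < y.re) {a : ℕ → ℂ}
    (ha : Summable fun n => ‖a n‖) :
    ∫ p in Ioi (0:ℝ), ∑' n : ℕ, extBeta p p (γ + n) y * a n =
      ∑' n : ℕ, betaIntegral (γ + n + 1) (y + 1) * a n := by
  have hx : ∀ n : ℕ, 0 < (γ + n).re := fun n => by simp; positivity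
  have hbound : ∀ n : ℕ, ∫ p in Ioi (0:ℝ), ‖extBeta p p (γ + n) y * a n‖ ≤
      realBeta γ.re y.re / 4 * ‖a n‖ := fun n => by
    simp_rw [norm_mul, integral_mul_const]
    gcongr
    refine (integral_norm_extBeta_le (hx n) hy).trans ?_
    gcongr
    exact realBeta_le_of_le hγ hy (by simp)
  rw [← integral_tsum_of_summable_integral_norm
    (fun n => (integrableOn_extBeta (hx n) hy).mul_const _)
    (Summable.of_nonneg_of_le (fun _ => integral_nonneg fun _ => norm_nonneg _) hbound
      (ha.mul_left _))]
  simp_rw [integral_mul_const, integral_extBeta (hx _) hy]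

lemma poch_eq_Gamma_div {c : ℂ} (hc : 0 < c.re) (n : ℕ) :
    poch c n = Complex.Gamma (c + n) / Complex.Gamma c := by
  have hc' : ∀ k : ℕ, c ≠ -k := fun k h => by
    have := congrArg Complex.re h; simp at this; linarith [(k.cast_nonneg : (0:ℝ) ≤ k)]
  rw [Complex.Gamma_add_nat_div_Gamma_eq c hc']
  induction n with
  | zero => simp [poch]
  | succ n ih => rw [poch_succ, ih, ascPochhammer_succ_eval]

lemma betaIntegral_mul_poch_div_cBeta {c γ : ℂ} (hγ : 0 < γ.re) (hcγ : γ.re < c.re) (n : ℕ) :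
    betaIntegral (γ + n + 1) (c - γ + 1) * poch c n / cBeta γ (c - γ) =
      Complex.Gamma (c + 1 - γ) / (Complex.Gamma γ * Complex.Gamma (c - γ)) *
        (Complex.Gamma (c + n) * Complex.Gamma (γ + 1 + n) / Complex.Gamma (c + 2 + n)) := by
  have hc : 0 < c.re := hγ.trans hcγ
  have hcγ' : 0 < (c - γ).re := by simpa using hcγ
  have hx : 0 < (γ + n + 1).re := by simp; positivity
  have hy : 0 < (c - γ + 1).re := by simp; linarith
  have hΓc := Complex.Gamma_ne_zero_of_re_pos hc
  have hΓγ := Complex.Gamma_ne_zero_of_re_pos hγ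
  have hΓcγ := Complex.Gamma_ne_zero_of_re_pos hcγ'
  rw [betaIntegral_eq_Gamma_mul_div _ _ hx hy, poch_eq_Gamma_div hc, cBeta,
    add_sub_cancel, show γ + n + 1 + (c - γ + 1) = c + 2 + n by ring,
    show γ + 1 + (n : ℂ) = γ + n + 1 by ring, show c + 1 - γ = c - γ + 1 by ring]
  field_simp

/-- the integral over `(0,∞)` in `p` of the extended Mittag-Leffler function of
Özarslan–Yılmaz, `E^{γ,c}_{α,β}(z; p) := E^{γ,c}_{α,β}(z; p, p)`. -/
theorem extML_single_integral (c α β γ : ℂ) (hcγ : γ.re < c.re) (hγ : 0 < γ.re)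
    (hα : 0 < α.re) (hβ : 0 < β.re) (z : ℂ) :
    (∫ p in Set.Ioi (0:ℝ), extML α β γ c p p z) =
      Complex.Gamma (c + 1 - γ) / (Complex.Gamma γ * Complex.Gamma (c - γ)) *
        ∑' n : ℕ, Complex.Gamma (c + n) * Complex.Gamma (γ + 1 + n) /
          (Complex.Gamma (α * n + β) * Complex.Gamma (c + 2 + n)) *
          z ^ n / n.factorial := by
  set a : ℕ → ℂ := fun n => poch c n * z ^ n / (Complex.Gamma (α * n + β) * n.factorial)
  have hsum : Summable fun n => ‖a n / cBeta γ (c - γ)‖ := by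
    simp_rw [norm_div (a _)]
    exact (summable_norm_prabhakar_term c z hα hβ).div_const _
  calc (∫ p in Set.Ioi (0:ℝ), extML α β γ c p p z)
      = ∫ p in Ioi (0:ℝ), ∑' n : ℕ, extBeta p p (γ + n) (c - γ) * (a n / cBeta γ (c - γ)) := by
        refine integral_congr_ae (Eventually.of_forall fun p => tsum_congr fun n => ?_)
        simp only [a]
        ring
    _ = ∑' n : ℕ, betaIntegral (γ + n + 1) (c - γ + 1) * (a n / cBeta γ (c - γ)) :=
        integral_tsum_extBeta_mul hγ (by simpa using hcγ) hsum
    _ = _ := by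
        rw [← tsum_mul_left]
        refine tsum_congr fun n => ?_
        linear_combination (z ^ n / (Complex.Gamma (α * n + β) * n.factorial)) *
          betaIntegral_mul_poch_div_cBeta hγ hcγ n
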